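/- In a fractional hedonic game with nonnegative valuations, if a coalition S of size at least 2 in a partition contains an agent with utility 0, and positivity of valuations is symmetric (v_a(b) > 0 iff v_b(a) > 0), and S is not a null coalition (some member of S has positive utility), then the partition is not Pareto-optimal. -/

import Mathlib

/-- A partition of the agent set `N` into coalitions: each agent `i` is assigned
the coalition `part i` containing her, and coalitions of members coincide. -/
structure HPartition (N : Type*) [Fintype N] [DecidableEq N] where
  part : N → Finset N
  mem_self : ∀ i, i ∈ part i
  eq_of_mem : ∀ i j, j ∈ part i → part j = part i

open Classical in
/-- Popularity margin `φ(π, π')`: number of agents strictly preferring `π`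
minus the number strictly preferring `π'`. -/
noncomputable def margin {N : Type*} [Fintype N] [DecidableEq N]
    (u : N → Finset N → ℝ) (π π' : HPartition N) : ℤ :=
  ((Finset.univ.filter fun i : N => u i (π'.part i) < u i (π.part i)).card : ℤ) -
  ((Finset.univ.filter fun i : N => u i (π.part i) < u i (π'.part i)).card : ℤ)

/-- A partition is popular if it never loses a pairwise vote. -/
def Popular {N : Type*} [Fintype N] [DecidableEq N]
    (u : N → Finset N → ℝ) (π : HPartition N) : Prop :=
  ∀ π' : HPartition N, 0 ≤ margin u π π'

/-- Fractional hedonic game utility of agent `i` in coalition `S`. -/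
noncomputable def fhgU {N : Type*} [DecidableEq N] (v : N → N → ℝ) (i : N) (S : Finset N) : ℝ :=
  (∑ j ∈ S.erase i, v i j) / (S.card : ℝ)

/-- A partition is Pareto-optimal if no partition weakly improves every agent
and strictly improves some agent. -/
def ParetoOptimal {N : Type*} [Fintype N] [DecidableEq N]
    (u : N → Finset N → ℝ) (π : HPartition N) : Prop :=
  ¬ ∃ π' : HPartition N,
      (∀ i, u i (π.part i) ≤ u i (π'.part i)) ∧ ∃ i, u i (π.part i) < u i (π'.part i)

/-!
Let `i` be the zero-utility agent of `S`. With nonnegative valuations, `u_i(S) = 0` forces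
`v_i(k) = 0` for every other member `k`, and by symmetric positivity also `v_k(i) = 0`. So `i`
contributes nothing to anyone in `S` while inflating the denominator `|S|`: splitting `i` off as a
singleton keeps `i` at utility `0`, multiplies the utility of every other member by
`|S| / (|S| - 1) > 1`, and leaves all other coalitions untouched. The member of positive utility
strictly gains, so this is a Pareto improvement.
-/

namespace HPartition

variable {N : Type*} [Fintype N] [DecidableEq N]

def isolate (π : HPartition N) (i : N) : HPartition N where
  part k := if k = i then {i} else (π.part k).erase i
  mem_self k := by
    by_cases hk : k = i
    · simp [hk]
    · simpa [hk] using π.mem_self k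
  eq_of_mem k l hl := by
    by_cases hk : k = i
    · simp_all
    · simp only [hk, if_false, Finset.mem_erase] at hl
      simp only [hl.1, hk, if_false, π.eq_of_mem k l hl.2]

@[simp]
theorem isolate_part_self (π : HPartition N) (i : N) : (π.isolate i).part i = {i} := by
  simp [isolate]

theorem isolate_part_of_ne (π : HPartition N) {i k : N} (hk : k ≠ i) :
    (π.isolate i).part k = (π.part k).erase i := by
  simp [isolate, hk]

end HPartition

theorem one_lt_div_sub_one {x : ℝ} (hx : 1 < x) : 1 < x / (x - 1) := by
  rw [one_lt_div (by linarith)]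
  linarith

section FHG

variable {N : Type*} [DecidableEq N] {v : N → N → ℝ}

@[simp]
theorem fhgU_singleton (i : N) : fhgU v i {i} = 0 := by
  simp [fhgU]

theorem fhgU_nonneg {i : N} (hnn : ∀ k, 0 ≤ v i k) (S : Finset N) : 0 ≤ fhgU v i S :=
  div_nonneg (Finset.sum_nonneg fun k _ => hnn k) (Nat.cast_nonneg _)

theorem valuation_eq_zero_of_fhgU_eq_zero {i k : N} {S : Finset N} (hnn : ∀ k, 0 ≤ v i k)
    (hu : fhgU v i S = 0) (hk : k ∈ S) (hki : k ≠ i) : v i k = 0 := by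
  have hcard : (S.card : ℝ) ≠ 0 := Nat.cast_ne_zero.mpr (Finset.card_ne_zero_of_mem hk)
  have hsum : ∑ l ∈ S.erase i, v i l = 0 := by
    simpa [fhgU, hcard] using hu
  exact (Finset.sum_eq_zero_iff_of_nonneg fun l _ => hnn l).mp hsum k
    (Finset.mem_erase.mpr ⟨hki, hk⟩)

theorem fhgU_erase_of_valuation_eq_zero {m i : N} {S : Finset N} (hv : v m i = 0) (hi : i ∈ S) :
    fhgU v m (S.erase i) = fhgU v m S * (S.card / (S.card - 1)) := by
  have hcard : (S.card : ℝ) ≠ 0 := Nat.cast_ne_zero.mpr (Finset.card_ne_zero_of_mem hi)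
  have hsum : ∑ k ∈ (S.erase i).erase m, v m k = ∑ k ∈ S.erase m, v m k := by
    rw [Finset.erase_right_comm]
    exact Finset.sum_erase _ hv
  rw [fhgU, fhgU, hsum, Finset.card_erase_of_mem hi,
    Nat.cast_sub (Finset.one_le_card.mpr ⟨i, hi⟩), Nat.cast_one, div_mul_div_cancel₀ hcard]

theorem fhgU_le_fhgU_erase {m i : N} {S : Finset N} (hnn : ∀ k, 0 ≤ v m k) (hv : v m i = 0)
    (hi : i ∈ S) (hS : 2 ≤ S.card) : fhgU v m S ≤ fhgU v m (S.erase i) := by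
  rw [fhgU_erase_of_valuation_eq_zero hv hi]
  exact le_mul_of_one_le_right (fhgU_nonneg hnn S) (one_lt_div_sub_one (by exact_mod_cast hS)).le

theorem fhgU_lt_fhgU_erase {m i : N} {S : Finset N} (hpos : 0 < fhgU v m S) (hv : v m i = 0)
    (hi : i ∈ S) (hS : 2 ≤ S.card) : fhgU v m S < fhgU v m (S.erase i) := by
  rw [fhgU_erase_of_valuation_eq_zero hv hi]
  exact lt_mul_of_one_lt_right hpos (one_lt_div_sub_one (by exact_mod_cast hS))

end FHG

/-- In an FHG with nonnegative valuations and symmetric positivity, a partition with a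
non-null coalition of size at least 2 containing a zero-utility agent is not
Pareto-optimal. -/
theorem fhg_zero_utility_in_nonnull_coalition_not_pareto_optimal
    {N : Type*} [Fintype N] [DecidableEq N]
    (v : N → N → ℝ) (hnn : ∀ a b, 0 ≤ v a b)
    (hsym : ∀ a b, 0 < v a b ↔ 0 < v b a)
    (π : HPartition N) (a i j : N)
    (hi : i ∈ π.part a) (hj : j ∈ π.part a)
    (hcard : 2 ≤ (π.part a).card)
    (hui : fhgU v i (π.part a) = 0)
    (huj : 0 < fhgU v j (π.part a)) :
    ¬ ParetoOptimal (fhgU v) π := by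
  set S := π.part a
  have hpart : ∀ m ∈ S, π.part m = S := fun m hm => π.eq_of_mem a m hm
  have hji : j ≠ i := by
    rintro rfl
    exact huj.ne' hui
  have hvi : ∀ m ∈ S, m ≠ i → v m i = 0 := fun m hm hmi => by
    have him : v i m = 0 := valuation_eq_zero_of_fhgU_eq_zero (hnn i) hui hm hmi
    exact le_antisymm (not_lt.mp fun h => ((hsym m i).mp h).ne' him) (hnn m i)
  intro hPO
  refine hPO ⟨π.isolate i, fun m => ?_, j, ?_⟩
  · by_cases hmi : m = i
    · subst hmi
      rw [hpart m hi, hui, HPartition.isolate_part_self, fhgU_singleton]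
    rw [π.isolate_part_of_ne hmi]
    by_cases him : i ∈ π.part m
    · have hmS : π.part m = S := (π.eq_of_mem m i him).symm.trans (hpart i hi)
      rw [hmS]
      exact fhgU_le_fhgU_erase (hnn m) (hvi m (hmS ▸ π.mem_self m) hmi) hi hcard
    · rw [Finset.erase_eq_of_notMem him]
  · rw [π.isolate_part_of_ne hji, hpart j hj]
    exact fhgU_lt_fhgU_erase huj (hvi j hj hji) hi hcard
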